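/- Let Φ_D be a quantum m-stochastic channel with m ≥ 3, σ^(0) = α·ρ_* + (1−α)·ρ^(0) a density matrix with α ∈ (0,1], and σ^(n+1) = Φ_D[σ^(n) ⊗ ⋯ ⊗ σ^(n)]. Then σ^(n) converges to the maximally mixed state ρ_* = I/N in Hilbert–Schmidt norm as n → ∞. -/

import Mathlib

open Matrix ComplexOrder

/-- The action of a multipartite matrix `D` on `(ℂ^N)^{⊗m}` as a multilinear map:
the output lives in slot `t`, the matrix `ρ s` is fed (via `I ⊗ ρ₁^⊤ ⊗ ⋯`) into each
input slot `s ≠ t`, and all input slots are traced out.  In components,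
`(Φ ρ)_{a b} = Σ_{k l : Fin m → Fin N, k t = a, l t = b} D_{k l} Π_{s ≠ t} (ρ s)_{k s, l s}`. -/
noncomputable def qAct {N m : ℕ} (D : Matrix (Fin m → Fin N) (Fin m → Fin N) ℂ)
    (t : Fin m) (ρ : Fin m → Matrix (Fin N) (Fin N) ℂ) : Matrix (Fin N) (Fin N) ℂ :=
  Matrix.of fun a b => ∑ k : Fin m → Fin N, ∑ l : Fin m → Fin N,
    if k t = a ∧ l t = b then D k l * ∏ s ∈ Finset.univ.erase t, ρ s (k s) (l s) else 0

/-- A density matrix: positive semidefinite with unit trace. -/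
def IsDensity {N : ℕ} (ρ : Matrix (Fin N) (Fin N) ℂ) : Prop :=
  ρ.PosSemidef ∧ ρ.trace = 1

/-- A quantum `m`-stochastic channel: the dynamical matrix `D` is positive semidefinite,
and for every choice of output slot `t`, feeding density matrices into the remaining
slots yields a trace-preserving (hence, with `D ≥ 0`, completely positive) map. -/
def QMStochastic {N m : ℕ} (D : Matrix (Fin m → Fin N) (Fin m → Fin N) ℂ) : Prop :=
  D.PosSemidef ∧
    ∀ (t : Fin m) (ρ : Fin m → Matrix (Fin N) (Fin N) ℂ),
      (∀ s : Fin m, s ≠ t → IsDensity (ρ s)) → (qAct D t ρ).trace = 1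


/-!
Write the iterates as `σ n = (1 - γₙ) ρ_* + γₙ τₙ` with `τₙ` a density matrix and `γ₀ = 1 - α`.
The channel is multilinear in its input slots and preserves density matrices, and it sends any
input carrying `ρ_*` in one slot (and density matrices elsewhere) to `ρ_*`: the entries of that
output are traces of the same channel read off at the slot of `ρ_*`, and those traces are fixed
by the stochasticity condition for that slot. Expanding two of the `m - 1 ≥ 2` input slots of
`Φ[σ ⊗ ⋯ ⊗ σ]` therefore gives `γₙ₊₁ = γₙ²`, so `γₙ = (1 - α) ^ 2 ^ n`, and the Hilbert–Schmidt
distance from `σ n` to `ρ_*` is at most `2 N γₙ`.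
-/

open Finset Function

section Matrices

variable {n : Type*} [Fintype n]

open scoped Matrix.Norms.L2Operator MatrixOrder in
theorem span_posSemidef [DecidableEq n] :
    Submodule.span ℂ {A : Matrix n n ℂ | A.PosSemidef} = ⊤ := by
  simpa [Matrix.nonneg_iff_posSemidef] using CStarAlgebra.span_nonneg (A := Matrix n n ℂ)

theorem posSemidef_hadamard_prod {𝕜 ι : Type*} [RCLike 𝕜] (S : Finset ι)
    {A : ι → Matrix n n 𝕜} (hA : ∀ i ∈ S, (A i).PosSemidef) :
    (of fun k l => ∏ i ∈ S, A i k l).PosSemidef := by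
  classical
  induction S using Finset.induction_on with
  | empty => simpa [vecMulVec] using posSemidef_vecMulVec_self_star (1 : n → 𝕜)
  | insert a S ha ih =>
    convert (hA a (mem_insert_self a S)).hadamard (ih fun i hi => hA i (mem_insert_of_mem hi))
      using 1
    ext k l
    simp [prod_insert ha]

theorem sqrt_trace_conjTranspose_mul_self_le {A : Matrix n n ℂ} {c : ℝ} (hc : 0 ≤ c)
    (hA : ∀ i j, ‖A i j‖ ≤ c) : √((Aᴴ * A).trace.re) ≤ Fintype.card n * c := by
  have htrace : (Aᴴ * A).trace.re = ∑ i, ∑ j, ‖A j i‖ ^ 2 := by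
    simp [trace, mul_apply, Complex.re_sum, ← Complex.normSq_eq_norm_sq, Complex.normSq_apply]
  rw [Real.sqrt_le_iff, htrace]
  refine ⟨by positivity, ?_⟩
  calc ∑ i, ∑ j, ‖A j i‖ ^ 2 ≤ ∑ _i : n, ∑ _j : n, c ^ 2 := by
        gcongr with i _ j _
        exact hA j i
    _ = (Fintype.card n * c) ^ 2 := by simp; ring

end Matrices

noncomputable def maximallyMixed (N : ℕ) : Matrix (Fin N) (Fin N) ℂ := (N : ℂ)⁻¹ • 1

section Density

variable {N : ℕ}

theorem IsDensity.norm_apply_le_one {τ : Matrix (Fin N) (Fin N) ℂ} (hτ : IsDensity τ)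
    (i j : Fin N) : ‖τ i j‖ ≤ 1 := by
  have hdiag : ∀ k, 0 ≤ (τ k k).re ∧ (τ k k).re ≤ 1 ∧ (τ k k).im = 0 := fun k => by
    have h0 : 0 ≤ τ k k := hτ.1.diag_nonneg
    have h1 : τ k k ≤ 1 := hτ.2 ▸ single_le_sum (f := fun k => τ k k)
      (fun k _ => hτ.1.diag_nonneg) (mem_univ k)
    rw [Complex.nonneg_iff] at h0
    rw [Complex.le_def] at h1
    exact ⟨h0.1, by simpa using h1.1, h0.2.symm⟩
  -- the `2 × 2` principal minor on `i, j` is nonnegative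
  have hminor : ‖τ j i‖ ^ 2 ≤ (τ i i * τ j j).re := by
    have hdet := (hτ.1.submatrix ![i, j]).det_nonneg
    rw [det_fin_two, Complex.nonneg_iff] at hdet
    simpa [← hτ.1.1.apply i j, Complex.conj_mul', ← Complex.ofReal_pow] using hdet.1
  obtain ⟨hi0, hi1, hi⟩ := hdiag i
  obtain ⟨hj0, hj1, hj⟩ := hdiag j
  rw [Complex.mul_re, hi, hj, zero_mul, sub_zero] at hminor
  rw [← hτ.1.1.apply i j, norm_star]
  nlinarith [norm_nonneg (τ j i), mul_le_one₀ hi1 hj0 hj1]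

theorem IsDensity.mix {ρ τ : Matrix (Fin N) (Fin N) ℂ} (hρ : IsDensity ρ) (hτ : IsDensity τ)
    {γ : ℝ} (hγ0 : 0 ≤ γ) (hγ1 : γ ≤ 1) : IsDensity ((1 - (γ : ℂ)) • ρ + (γ : ℂ) • τ) := by
  refine ⟨(hρ.1.smul ?_).add (hτ.1.smul (Complex.zero_le_real.2 hγ0)), ?_⟩
  · simpa using Complex.zero_le_real.2 (sub_nonneg.2 hγ1)
  · simp [trace_add, trace_smul, hρ.2, hτ.2]

theorem sqrt_trace_mix_sub_le {ρ τ : Matrix (Fin N) (Fin N) ℂ} (hρ : IsDensity ρ)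
    (hτ : IsDensity τ) {γ : ℝ} (hγ : 0 ≤ γ) :
    √((((1 - (γ : ℂ)) • ρ + (γ : ℂ) • τ - ρ)ᴴ * ((1 - (γ : ℂ)) • ρ + (γ : ℂ) • τ - ρ)).trace.re) ≤
      N * (2 * γ) := by
  have hentry : ∀ i j, ‖((1 - (γ : ℂ)) • ρ + (γ : ℂ) • τ - ρ) i j‖ ≤ 2 * γ := fun i j => by
    have hij : ((1 - (γ : ℂ)) • ρ + (γ : ℂ) • τ - ρ) i j = γ * (τ i j - ρ i j) := by
      simp only [Matrix.sub_apply, Matrix.add_apply, Matrix.smul_apply, smul_eq_mul]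
      ring
    have hsub : ‖τ i j - ρ i j‖ ≤ 2 := by
      linarith [norm_sub_le (τ i j) (ρ i j), hτ.norm_apply_le_one i j, hρ.norm_apply_le_one i j]
    rw [hij, norm_mul, Complex.norm_real, Real.norm_of_nonneg hγ, mul_comm 2]
    exact mul_le_mul_of_nonneg_left hsub hγ
  simpa only [Fintype.card_fin] using sqrt_trace_conjTranspose_mul_self_le (by positivity) hentry

theorem LinearMap.eq_trace_of_isDensity {g : Matrix (Fin N) (Fin N) ℂ →ₗ[ℂ] ℂ}
    (hg : ∀ ρ, IsDensity ρ → g ρ = 1) : g = traceLinearMap (Fin N) ℂ ℂ := by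
  refine LinearMap.ext_on span_posSemidef fun A (hA : A.PosSemidef) => ?_
  change g A = A.trace
  by_cases h0 : A.trace = 0
  · rw [h0, hA.trace_eq_zero_iff.1 h0, map_zero]
  have hρ : IsDensity (A.trace⁻¹ • A) := ⟨hA.smul (inv_nonneg_of_nonneg hA.trace_nonneg),
    by rw [trace_smul, smul_eq_mul, inv_mul_cancel₀ h0]⟩
  calc g A = A.trace • g (A.trace⁻¹ • A) := by
        rw [map_smul, smul_smul, mul_inv_cancel₀ h0, one_smul]
    _ = A.trace := by rw [hg _ hρ, smul_eq_mul, mul_one]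

theorem isDensity_maximallyMixed (hN : 0 < N) : IsDensity (maximallyMixed N) :=
  ⟨PosSemidef.one.smul (inv_nonneg_of_nonneg (Nat.cast_nonneg' N)), by
    simp [maximallyMixed, trace_smul, hN.ne']⟩

end Density

section qAct

variable {N m : ℕ} {D : Matrix (Fin m → Fin N) (Fin m → Fin N) ℂ}

theorem qAct_posSemidef (hD : D.PosSemidef) (t : Fin m) {ρ : Fin m → Matrix (Fin N) (Fin N) ℂ}
    (hρ : ∀ s, s ≠ t → (ρ s).PosSemidef) : (qAct D t ρ).PosSemidef := by
  -- `qAct D t ρ = Vᴴ (D ⊙ W) V`, with `W` the tensor product of the inputs and `V` the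
  -- isometry picking out the output slot
  set V : Matrix (Fin m → Fin N) (Fin N) ℂ := of fun k a => if k t = a then 1 else 0
  set W : Matrix (Fin m → Fin N) (Fin m → Fin N) ℂ :=
    of fun k l => ∏ s ∈ univ.erase t, ρ s (k s) (l s)
  have hW : W.PosSemidef := posSemidef_hadamard_prod _ fun s hs =>
    (hρ s (mem_erase.1 hs).1).submatrix fun k : Fin m → Fin N => k s
  have hqAct : qAct D t ρ = Vᴴ * (D ⊙ W) * V := by
    ext a b
    simp only [V, W, qAct, mul_apply, of_apply, conjTranspose_apply, hadamard_apply, sum_mul]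
    rw [sum_comm]
    refine sum_congr rfl fun l _ => sum_congr rfl fun k _ => ?_
    split_ifs <;> simp_all
  rw [hqAct]
  exact (hD.hadamard hW).conjTranspose_mul_mul_same V

theorem qAct_isDensity (hD : QMStochastic D) (t : Fin m) {ρ : Fin m → Matrix (Fin N) (Fin N) ℂ}
    (hρ : ∀ s, s ≠ t → IsDensity (ρ s)) : IsDensity (qAct D t ρ) :=
  ⟨qAct_posSemidef hD.1 t fun s hs => (hρ s hs).1, hD.2 t ρ hρ⟩

theorem qAct_update_apply {t s : Fin m} (hs : s ≠ t) (ρ : Fin m → Matrix (Fin N) (Fin N) ℂ)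
    (X : Matrix (Fin N) (Fin N) ℂ) (a b : Fin N) :
    qAct D t (update ρ s X) a b = ∑ k : Fin m → Fin N, ∑ l : Fin m → Fin N,
      if k t = a ∧ l t = b then
        D k l * (X (k s) (l s) * ∏ r ∈ (univ.erase t).erase s, ρ r (k r) (l r)) else 0 := by
  simp only [qAct, of_apply]
  refine sum_congr rfl fun k _ => sum_congr rfl fun l _ => ?_
  rw [← mul_prod_erase _ _ (mem_erase.2 ⟨hs, mem_univ s⟩), update_self,
    prod_congr rfl fun r hr => by rw [update_of_ne (mem_erase.1 hr).1]]

variable (D) in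
noncomputable def qActSlot {t s : Fin m} (hs : s ≠ t) (ρ : Fin m → Matrix (Fin N) (Fin N) ℂ) :
    Matrix (Fin N) (Fin N) ℂ →ₗ[ℂ] Matrix (Fin N) (Fin N) ℂ where
  toFun X := qAct D t (update ρ s X)
  map_add' X Y := by
    ext a b
    simp only [Matrix.add_apply, qAct_update_apply hs, ← sum_add_distrib]
    refine sum_congr rfl fun k _ => sum_congr rfl fun l _ => ?_
    split_ifs <;> ring
  map_smul' c X := by
    ext a b
    simp only [Matrix.smul_apply, qAct_update_apply hs, smul_eq_mul, mul_sum, RingHom.id_apply]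
    refine sum_congr rfl fun k _ => sum_congr rfl fun l _ => ?_
    split_ifs <;> ring

theorem qActSlot_apply {t s : Fin m} (hs : s ≠ t) (ρ : Fin m → Matrix (Fin N) (Fin N) ℂ)
    (X : Matrix (Fin N) (Fin N) ℂ) : qActSlot D hs ρ X = qAct D t (update ρ s X) := rfl

theorem trace_qAct_update (hD : QMStochastic D) {t s : Fin m} (hs : s ≠ t)
    {ρ : Fin m → Matrix (Fin N) (Fin N) ℂ} (hρ : ∀ r, r ≠ t → r ≠ s → IsDensity (ρ r))
    (X : Matrix (Fin N) (Fin N) ℂ) : (qAct D t (update ρ s X)).trace = X.trace := by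
  have hslot : traceLinearMap (Fin N) ℂ ℂ ∘ₗ qActSlot D hs ρ = traceLinearMap (Fin N) ℂ ℂ :=
    LinearMap.eq_trace_of_isDensity fun τ hτ => hD.2 t _ fun r hr => by
      rcases eq_or_ne r s with rfl | hrs
      · rwa [update_self]
      · rw [update_of_ne hrs]
        exact hρ r hr hrs
  exact LinearMap.congr_fun hslot X

theorem qAct_update_one_apply {t s : Fin m} (hs : s ≠ t) (ρ : Fin m → Matrix (Fin N) (Fin N) ℂ)
    (a b : Fin N) :
    qAct D t (update ρ s 1) a b = (qAct D s (update ρ t (single a b 1))).trace := by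
  have hsum (x : ℂ) (p q : Fin N) :
      ∑ c : Fin N, (if p = c ∧ q = c then x else 0) = if p = q then x else 0 := by
    simp [ite_and, eq_comm]
  simp only [trace, Matrix.diag_apply, qAct_update_apply hs, qAct_update_apply hs.symm]
  symm
  rw [sum_comm]
  refine sum_congr rfl fun k _ => ?_
  rw [sum_comm]
  refine sum_congr rfl fun l _ => ?_
  rw [hsum, erase_right_comm]
  by_cases hks : k s = l s <;> simp [one_apply, single_apply, hks, eq_comm]

theorem qAct_update_maximallyMixed (hD : QMStochastic D) {t s : Fin m} (hs : s ≠ t)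
    {ρ : Fin m → Matrix (Fin N) (Fin N) ℂ} (hρ : ∀ r, r ≠ t → r ≠ s → IsDensity (ρ r)) :
    qAct D t (update ρ s (maximallyMixed N)) = maximallyMixed N := by
  ext a b
  rw [maximallyMixed, ← qActSlot_apply hs, map_smul, Matrix.smul_apply, qActSlot_apply,
    qAct_update_one_apply hs, trace_qAct_update hD hs.symm fun r hrs hrt => hρ r hrt hrs]
  rcases eq_or_ne a b with rfl | hab
  · simp
  · simp [hab]

theorem qAct_update_mix (hD : QMStochastic D) {t s : Fin m} (hs : s ≠ t)
    {ρ : Fin m → Matrix (Fin N) (Fin N) ℂ} (hρ : ∀ r, r ≠ t → r ≠ s → IsDensity (ρ r))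
    (γ : ℂ) (X : Matrix (Fin N) (Fin N) ℂ) :
    qAct D t (update ρ s ((1 - γ) • maximallyMixed N + γ • X)) =
      (1 - γ) • maximallyMixed N + γ • qAct D t (update ρ s X) := by
  rw [← qActSlot_apply hs, map_add, map_smul, map_smul, qActSlot_apply, qActSlot_apply,
    qAct_update_maximallyMixed hD hs hρ]

theorem exists_qAct_const_mix (hD : QMStochastic D) {t s₁ s₂ : Fin m} (h₁ : s₁ ≠ t)
    (h₂ : s₂ ≠ t) (h₁₂ : s₁ ≠ s₂) (hN : 0 < N) {γ : ℝ} (hγ0 : 0 ≤ γ) (hγ1 : γ ≤ 1)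
    {τ : Matrix (Fin N) (Fin N) ℂ} (hτ : IsDensity τ) :
    ∃ τ', IsDensity τ' ∧
      qAct D t (fun _ => (1 - (γ : ℂ)) • maximallyMixed N + (γ : ℂ) • τ) =
        (1 - ((γ ^ 2 : ℝ) : ℂ)) • maximallyMixed N + ((γ ^ 2 : ℝ) : ℂ) • τ' := by
  set σ := (1 - (γ : ℂ)) • maximallyMixed N + (γ : ℂ) • τ
  have hσ : IsDensity σ := (isDensity_maximallyMixed hN).mix hτ hγ0 hγ1
  set ρ₁ : Fin m → Matrix (Fin N) (Fin N) ℂ := update (fun _ => σ) s₁ τ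
  set ρ₂ := update ρ₁ s₂ τ
  have hρ₁ : ∀ r, IsDensity (ρ₁ r) :=
    (forall_update_iff _ fun _ M => IsDensity M).2 ⟨hτ, fun _ _ => hσ⟩
  have hρ₂ : ∀ r, IsDensity (ρ₂ r) :=
    (forall_update_iff _ fun _ M => IsDensity M).2 ⟨hτ, fun r _ => hρ₁ r⟩
  refine ⟨qAct D t ρ₂, qAct_isDensity hD t fun r _ => hρ₂ r, ?_⟩
  have step₁ :
      qAct D t (fun _ => σ) = (1 - (γ : ℂ)) • maximallyMixed N + (γ : ℂ) • qAct D t ρ₁ := by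
    rw [← update_eq_self s₁ fun _ => σ]
    exact qAct_update_mix hD h₁ (fun _ _ _ => hσ) γ τ
  have step₂ : qAct D t ρ₁ = (1 - (γ : ℂ)) • maximallyMixed N + (γ : ℂ) • qAct D t ρ₂ := by
    rw [← update_eq_self s₂ ρ₁, show ρ₁ s₂ = σ from update_of_ne h₁₂.symm _ _]
    exact qAct_update_mix hD h₂ (fun r _ _ => hρ₁ r) γ τ
  rw [step₁, step₂]
  push_cast
  module

end qAct

theorem qAct_iterates_tendsto_maximally_mixed {N m : ℕ} (hm : 3 ≤ m)
    (D : Matrix (Fin m → Fin N) (Fin m → Fin N) ℂ) (hD : QMStochastic D)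
    (α : ℝ) (hα : α ∈ Set.Ioc (0 : ℝ) 1)
    (ρ0 : Matrix (Fin N) (Fin N) ℂ) (hρ0 : IsDensity ρ0)
    (σ : ℕ → Matrix (Fin N) (Fin N) ℂ)
    (hσ0 : σ 0 = (α : ℂ) • ((N : ℂ)⁻¹ • (1 : Matrix (Fin N) (Fin N) ℂ)) +
      ((1 - α : ℝ) : ℂ) • ρ0)
    (hrec : ∀ n, σ (n + 1) = qAct D ⟨0, by omega⟩ fun _ => σ n) :
    Filter.Tendsto
      (fun n => Real.sqrt
        (((σ n - (N : ℂ)⁻¹ • (1 : Matrix (Fin N) (Fin N) ℂ))ᴴ *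
          (σ n - (N : ℂ)⁻¹ • (1 : Matrix (Fin N) (Fin N) ℂ))).trace.re))
      Filter.atTop (nhds 0) := by
  obtain ⟨hα0, hα1⟩ := hα
  have hβ : 0 ≤ 1 - α := sub_nonneg.2 hα1
  have hN : 0 < N := Nat.pos_of_ne_zero fun h => by subst h; simpa [trace] using hρ0.2
  have hσ : ∀ n, ∃ τ, IsDensity τ ∧ σ n =
      (1 - (((1 - α) ^ 2 ^ n : ℝ) : ℂ)) • maximallyMixed N + (((1 - α) ^ 2 ^ n : ℝ) : ℂ) • τ := by
    intro n
    induction n with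
    | zero => exact ⟨ρ0, hρ0, by rw [hσ0, maximallyMixed]; push_cast; ring_nf⟩
    | succ n ih =>
      obtain ⟨τ, hτ, hστ⟩ := ih
      obtain ⟨τ', hτ', hstep⟩ := exists_qAct_const_mix hD (t := ⟨0, by omega⟩)
        (s₁ := ⟨1, by omega⟩) (s₂ := ⟨2, by omega⟩) (by simp [Fin.ext_iff])
        (by simp [Fin.ext_iff]) (by simp [Fin.ext_iff]) hN (pow_nonneg hβ _)
        (pow_le_one₀ hβ (by linarith)) hτ
      refine ⟨τ', hτ', ?_⟩
      rw [hrec, hστ, hstep, ← pow_mul, ← pow_succ]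
  choose τ hτ hστ using hσ
  have hbound : Filter.Tendsto (fun n => N * (2 * (1 - α) ^ 2 ^ n)) Filter.atTop (nhds 0) := by
    simpa using (((tendsto_pow_atTop_nhds_zero_of_lt_one hβ (by linarith)).comp
      (tendsto_pow_atTop_atTop_of_one_lt (α := ℕ) one_lt_two)).const_mul 2).const_mul (N : ℝ)
  refine squeeze_zero (fun n => Real.sqrt_nonneg _) (fun n => ?_) hbound
  rw [hστ n]
  exact sqrt_trace_mix_sub_le (isDensity_maximallyMixed hN) (hτ n) (pow_nonneg hβ _)
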